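/- arXiv:2301.08988 — 7 statements merged into one kernel-verified Lean document; each statement's English description precedes it below -/
import Mathlib

section
/- For all integers d ≥ 1 and k ≥ 2, the product ∏_{i=1}^{d-1} (kd - k - i + 1)/(kd - i) equals ∏_{i=1}^{min(k-1,d-1)} ((k-1)d - k + i + 1)/(kd - i). -/
/-!
With `F x = k d - 1 - x`, the left side is `∏_{j<d-1} F (k-1+j) / ∏_{j<d-1} F j`, a quotient of
two runs of `d-1` consecutive values of `F` offset by `k-1`. The values the runs share cancel, and
what survives is the first `min (k-1) (d-1)` values of each run, read in the opposite direction
in the numerator.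
-/

open Finset

theorem Finset.prod_Icc_one_eq_prod_range {M : Type*} [CommMonoid M] (f : ℕ → M) (n : ℕ) :
    ∏ i ∈ Icc 1 n, f i = ∏ j ∈ range n, f (j + 1) := by
  rw [← Ico_add_one_right_eq_Icc, prod_Ico_eq_prod_range]
  simp only [add_tsub_cancel_right, add_comm]

theorem prod_range_shift_mul_prod_range_min {M : Type*} [CommMonoid M] (f : ℕ → M)
    (m s : ℕ) :
    (∏ j ∈ range m, f (s + j)) * ∏ j ∈ range (min s m), f j =
      (∏ j ∈ range (min s m), f (s + m - 1 - j)) * ∏ j ∈ range m, f j := by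
  have reflect : ∏ j ∈ range (min s m), f (s + m - 1 - j) =
      ∏ j ∈ range (min s m), f (s + m - min s m + j) := by
    rw [← prod_range_reflect]
    refine prod_congr rfl fun j hj => congrArg f ?_
    rw [mem_range] at hj
    omega
  rw [reflect]
  rcases le_total s m with h | h
  · rw [min_eq_left h, Nat.add_sub_cancel_left, mul_comm, ← prod_range_add, mul_comm,
      ← prod_range_add, add_comm]
  · rw [min_eq_right h, Nat.add_sub_cancel, mul_comm]

theorem prod_range_shift_div_prod_range {K : Type*} [Field K] (f : ℕ → K) {m : ℕ}
    (hf : ∀ j < m, f j ≠ 0) (s : ℕ) :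
    (∏ j ∈ range m, f (s + j)) / ∏ j ∈ range m, f j =
      (∏ j ∈ range (min s m), f (s + m - 1 - j)) / ∏ j ∈ range (min s m), f j := by
  have hprod : ∀ n ≤ m, ∏ j ∈ range n, f j ≠ 0 := fun n hn =>
    prod_ne_zero_iff.2 fun j hj => hf j (lt_of_lt_of_le (mem_range.1 hj) hn)
  rw [div_eq_div_iff (hprod m le_rfl) (hprod _ (min_le_right s m))]
  exact prod_range_shift_mul_prod_range_min f m s

theorem stmt0_general (d k : ℕ) (hk : 2 ≤ k) :
    ∏ i ∈ Finset.Icc 1 (d - 1),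
        (((k : ℚ) * d - k - i + 1) / ((k : ℚ) * d - i)) =
    ∏ i ∈ Finset.Icc 1 (min (k - 1) (d - 1)),
        ((((k : ℚ) - 1) * d - k + i + 1) / ((k : ℚ) * d - i)) := by
  set F : ℕ → ℚ := fun x => k * d - 1 - x with hF
  have hF_ne : ∀ j < d - 1, F j ≠ 0 := by
    intro j hj
    have hjk : j + 1 < k * d :=
      (by omega : j + 1 < d).trans_le (Nat.le_mul_of_pos_left d (by omega))
    have : (j : ℚ) + 1 < k * d := by exact_mod_cast hjk
    simp only [hF]
    linarith
  have lhs : ∏ i ∈ Icc 1 (d - 1), (((k : ℚ) * d - k - i + 1) / ((k : ℚ) * d - i)) =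
      (∏ j ∈ range (d - 1), F (k - 1 + j)) / ∏ j ∈ range (d - 1), F j := by
    rw [prod_Icc_one_eq_prod_range, ← prod_div_distrib]
    refine prod_congr rfl fun j _ => ?_
    simp only [hF]
    push_cast [Nat.cast_sub (by omega : 1 ≤ k)]
    ring
  have rhs : ∏ i ∈ Icc 1 (min (k - 1) (d - 1)),
      ((((k : ℚ) - 1) * d - k + i + 1) / ((k : ℚ) * d - i)) =
      (∏ j ∈ range (min (k - 1) (d - 1)), F (k - 1 + (d - 1) - 1 - j)) /
        ∏ j ∈ range (min (k - 1) (d - 1)), F j := by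
    rw [prod_Icc_one_eq_prod_range, ← prod_div_distrib]
    refine prod_congr rfl fun j hj => ?_
    rw [mem_range] at hj
    simp only [hF]
    rw [show k - 1 + (d - 1) - 1 - j = k + d - (j + 3) by omega, Nat.cast_sub (by omega)]
    push_cast
    ring
  rw [lhs, rhs, prod_range_shift_div_prod_range F hF_ne]

/-- Telescoping identity:
`∏_{i=1}^{d-1} (kd-k-i+1)/(kd-i) = ∏_{i=1}^{min(k-1,d-1)} ((k-1)d-k+i+1)/(kd-i)`. -/
theorem stmt0 (d k : ℕ) (hd : 1 ≤ d) (hk : 2 ≤ k) :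
    ∏ i ∈ Finset.Icc 1 (d - 1),
        (((k : ℚ) * d - k - i + 1) / ((k : ℚ) * d - i)) =
    ∏ i ∈ Finset.Icc 1 (min (k - 1) (d - 1)),
        ((((k : ℚ) - 1) * d - k + i + 1) / ((k : ℚ) * d - i)) :=
  stmt0_general d k hk
end

section
/- For all integers k ≥ 2, the function d ↦ ∏_{i=1}^{min(k-1,d-1)} ((k-1)d - k + i + 1)/(kd - i) is monotone decreasing in d (for d ≥ 1) and tends to (1 - 1/k)^{k-1} as d → ∞. -/
/-!
With `a = k - 1`, `b = d - 1` and `c = a * b` the `i`-th factor is `(c + i) / (c + a + b + 1 - i)`,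
so the product is `(c + a)! (c + b)! / (c! (c + a + b)!)` whichever of `a`, `b` is the smaller.
Reading this symmetric expression as a product of `a` factors instead gives
`P = ∏_{i=1}^{k-1} ((k-1)d + 1 - i) / (kd - i)`: a fixed number of factors, each of which is
nonnegative, decreasing in `d` and tends to `1 - 1/k`.
-/

open Filter Finset Nat

lemma prod_Icc_natCast_add (c m : ℕ) : ∏ i ∈ Icc 1 m, ((c : ℝ) + i) = (c + m)! / c ! := by
  induction m with
  | zero => simp [(factorial_pos c).ne']
  | succ m ih =>
    rw [prod_Icc_succ_top (by omega), ih, ← add_assoc, factorial_succ]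
    push_cast
    field_simp
    ring

lemma prod_Icc_natCast_add_one_sub {n m : ℕ} (h : m ≤ n) :
    ∏ i ∈ Icc 1 m, ((n : ℝ) + 1 - i) = n ! / (n - m)! := by
  induction m with
  | zero => simp [(factorial_pos n).ne']
  | succ m ih =>
    rw [prod_Icc_succ_top (by omega), ih (by omega),
      show n - m = n - (m + 1) + 1 by omega, factorial_succ]
    push_cast [Nat.cast_sub h]
    rw [show (n : ℝ) + 1 - (m + 1) = n - (m + 1) + 1 by ring]
    have hpos : (0 : ℝ) < n - (m + 1) + 1 := by
      have : (m : ℝ) + 1 ≤ n := by exact_mod_cast h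
      linarith
    field_simp

lemma prod_Icc_min_div_eq_factorial (c a b : ℕ) :
    ∏ i ∈ Icc 1 (min a b), ((c : ℝ) + i) / (c + a + b + 1 - i) =
      (c + a)! * (c + b)! / (c ! * (c + a + b)!) := by
  have h := prod_Icc_natCast_add_one_sub (n := c + a + b) (m := min a b) (by omega)
  push_cast at h
  rw [prod_div_distrib, prod_Icc_natCast_add, h]
  rcases le_total a b with hab | hab
  · rw [min_eq_left hab, show c + a + b - a = c + b by omega]
    field_simp
  · rw [min_eq_right hab, show c + a + b - b = c + a by omega]
    field_simp

lemma prod_Icc_div_eq_factorial (c a b : ℕ) :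
    ∏ i ∈ Icc 1 a, ((c : ℝ) + a + 1 - i) / (c + a + b + 1 - i) =
      (c + a)! * (c + b)! / (c ! * (c + a + b)!) := by
  have hnum := prod_Icc_natCast_add_one_sub (n := c + a) (m := a) (by omega)
  have hden := prod_Icc_natCast_add_one_sub (n := c + a + b) (m := a) (by omega)
  push_cast at hnum hden
  rw [prod_div_distrib, hnum, hden, show c + a - a = c by omega,
    show c + a + b - a = c + b by omega]
  field_simp

noncomputable def edgeSurvivalProb (k d : ℕ) : ℝ :=
  ∏ i ∈ Icc 1 (min (k - 1) (d - 1)), ((((k : ℝ) - 1) * d - k + i + 1) / ((k : ℝ) * d - i))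

noncomputable def survivalFactor (k i d : ℝ) : ℝ := ((k - 1) * d + 1 - i) / (k * d - i)

lemma edgeSurvivalProb_eq_prod_survivalFactor (k : ℕ) {d : ℕ} (hd : 1 ≤ d) :
    edgeSurvivalProb k d = ∏ i ∈ Icc 1 (k - 1), survivalFactor k i d := by
  obtain rfl | hk := k.eq_zero_or_pos
  · simp [edgeSurvivalProb]
  obtain ⟨a, rfl⟩ : ∃ a, k = a + 1 := ⟨k - 1, by omega⟩
  obtain ⟨b, rfl⟩ : ∃ b, d = b + 1 := ⟨d - 1, by omega⟩
  have key := (prod_Icc_min_div_eq_factorial (a * b) a b).trans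
    (prod_Icc_div_eq_factorial (a * b) a b).symm
  simp only [edgeSurvivalProb, survivalFactor, Nat.add_sub_cancel]
  convert key using 3 with i _ i _ <;> push_cast <;> ring

lemma survivalFactor_nonneg {k i d : ℝ} (hk : 1 ≤ k) (hik : i < k) (hd : 1 ≤ d) :
    0 ≤ survivalFactor k i d := by
  unfold survivalFactor
  apply div_nonneg <;> nlinarith

lemma survivalFactor_antitoneOn {k i : ℝ} (hi : 0 ≤ i) (hik : i < k) :
    AntitoneOn (survivalFactor k i) (Set.Ici 1) := by
  intro d₁ hd₁ d₂ hd₂ hd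
  simp only [Set.mem_Ici] at hd₁ hd₂
  unfold survivalFactor
  rw [div_le_div_iff₀ (by nlinarith) (by nlinarith)]
  -- the cross difference is `(d₂ - d₁) * (k - i)`
  nlinarith [mul_nonneg (sub_nonneg.2 hd) (sub_nonneg.2 hik.le)]

lemma tendsto_survivalFactor {k : ℝ} (hk : 0 < k) (i : ℝ) :
    Tendsto (survivalFactor k i) atTop (nhds (1 - 1 / k)) := by
  have hden : Tendsto (fun d => k * d - i) atTop atTop := by
    simpa [sub_eq_add_neg] using
      tendsto_atTop_add_const_right _ (-i) (tendsto_id.const_mul_atTop hk)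
  have hrem := (tendsto_const_nhds (x := 1 - i / k)).div_atTop hden
  rw [← add_zero (1 - 1 / k)]
  refine (tendsto_const_nhds.add hrem).congr' ?_
  filter_upwards [hden.eventually_gt_atTop 0] with d hd
  unfold survivalFactor
  field_simp
  ring

lemma edgeSurvivalProb_antitoneOn (k : ℕ) : AntitoneOn (edgeSurvivalProb k) (Set.Ici 1) := by
  intro d₁ hd₁ d₂ hd₂ hd
  rw [edgeSurvivalProb_eq_prod_survivalFactor k hd₁, edgeSurvivalProb_eq_prod_survivalFactor k hd₂]
  have hd₁' : (1 : ℝ) ≤ d₁ := by exact_mod_cast hd₁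
  have hd' : (d₁ : ℝ) ≤ d₂ := by exact_mod_cast hd
  refine prod_le_prod (fun i hi => ?_) (fun i hi => ?_) <;>
  obtain ⟨hi₁, hik⟩ : (1 : ℝ) ≤ i ∧ (i : ℝ) < k := by
    obtain ⟨hi₁, hik⟩ := mem_Icc.1 hi
    exact ⟨by exact_mod_cast hi₁, by exact_mod_cast (by omega : i < k)⟩
  · exact survivalFactor_nonneg (hi₁.trans hik.le) hik (hd₁'.trans hd')
  · exact survivalFactor_antitoneOn (zero_le_one.trans hi₁) hik hd₁' (hd₁'.trans hd') hd'

lemma tendsto_edgeSurvivalProb (k : ℕ) :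
    Tendsto (edgeSurvivalProb k) atTop (nhds ((1 - 1 / (k : ℝ)) ^ (k - 1))) := by
  have h : Tendsto (fun d : ℕ => ∏ i ∈ Icc 1 (k - 1), survivalFactor k i d) atTop
      (nhds (∏ _i ∈ Icc 1 (k - 1), (1 - 1 / (k : ℝ)))) :=
    tendsto_finsetProd _ fun i hi =>
      (tendsto_survivalFactor (Nat.cast_pos.2 (by have := mem_Icc.1 hi; omega)) i).comp
        tendsto_natCast_atTop_atTop
  rw [prod_const, Nat.card_Icc, Nat.add_sub_cancel] at h
  exact h.congr' ((eventually_ge_atTop 1).mono fun d hd =>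
    (edgeSurvivalProb_eq_prod_survivalFactor k hd).symm)

theorem stmt1_general (k : ℕ) :
    (∀ d₁ d₂ : ℕ, 1 ≤ d₁ → d₁ ≤ d₂ →
      ∏ i ∈ Finset.Icc 1 (min (k - 1) (d₂ - 1)),
          ((((k : ℝ) - 1) * d₂ - k + i + 1) / ((k : ℝ) * d₂ - i)) ≤
      ∏ i ∈ Finset.Icc 1 (min (k - 1) (d₁ - 1)),
          ((((k : ℝ) - 1) * d₁ - k + i + 1) / ((k : ℝ) * d₁ - i))) ∧
    Tendsto (fun d : ℕ =>
      ∏ i ∈ Finset.Icc 1 (min (k - 1) (d - 1)),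
          ((((k : ℝ) - 1) * d - k + i + 1) / ((k : ℝ) * d - i)))
      atTop (nhds ((1 - 1 / (k : ℝ)) ^ (k - 1))) :=
  ⟨fun _ _ hd₁ hd => edgeSurvivalProb_antitoneOn k hd₁ (hd₁.trans hd) hd,
    tendsto_edgeSurvivalProb k⟩

/-- For fixed `k ≥ 2`, the map
`d ↦ ∏_{i=1}^{min(k-1,d-1)} ((k-1)d-k+i+1)/(kd-i)` (i.e. `P(dk,d,k)`)
is monotone decreasing in `d` (for `d ≥ 1`) and tends to `(1-1/k)^(k-1)` as `d → ∞`. -/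
theorem stmt1 (k : ℕ) (hk : 2 ≤ k) :
    (∀ d₁ d₂ : ℕ, 1 ≤ d₁ → d₁ ≤ d₂ →
      ∏ i ∈ Finset.Icc 1 (min (k - 1) (d₂ - 1)),
          ((((k : ℝ) - 1) * d₂ - k + i + 1) / ((k : ℝ) * d₂ - i)) ≤
      ∏ i ∈ Finset.Icc 1 (min (k - 1) (d₁ - 1)),
          ((((k : ℝ) - 1) * d₁ - k + i + 1) / ((k : ℝ) * d₁ - i))) ∧
    Tendsto (fun d : ℕ =>
      ∏ i ∈ Finset.Icc 1 (min (k - 1) (d - 1)),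
          ((((k : ℝ) - 1) * d - k + i + 1) / ((k : ℝ) * d - i)))
      atTop (nhds ((1 - 1 / (k : ℝ)) ^ (k - 1))) :=
  stmt1_general k
end

section
/- For all integers d ≥ 1 and k ≥ 2, ∏_{i=1}^{min(k-1,d-1)} ((k-1)d - k + i + 1)/(kd - i) ≥ (1 - 1/k)^{k-1}. -/
/-!
The factors are symmetric in `k` and `d`; let `a = min k d ≤ b = max k d`. Reversing the order of
the numerators (`i ↦ a - i`) turns the `i`-th factor into `(ab - b + 1 - i) / (ab - i)`, which is at
least `1 - 1/a` because `a (ab - b + 1 - i) - (a - 1) (ab - i) = a - i > 0`. So the product is at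
least `(1 - 1/a)^(a-1)`, and by Bernoulli's inequality `(1 - 1/n)^(n-1)` decreases in `n`.
-/

open Finset

lemma one_sub_inv_pow_succ_le (m : ℕ) :
    (1 - 1 / ((m : ℝ) + 2)) ^ (m + 1) ≤ (1 - 1 / ((m : ℝ) + 1)) ^ m := by
  set q : ℝ := 1 - 1 / ((m : ℝ) + 2)
  set r : ℝ := 1 - 1 / ((m : ℝ) + 1) ^ 2
  have hq : 0 ≤ q := by
    rw [sub_nonneg, div_le_one (by positivity)]; linarith [m.cast_nonneg (α := ℝ)]
  have hqr : q * r = 1 - 1 / ((m : ℝ) + 1) := by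
    simp only [q, r]; field_simp; ring
  have hq_le : q ≤ r ^ m :=
    calc q ≤ 1 + m * (-(1 / ((m : ℝ) + 1) ^ 2)) := by
          simp only [q]; rw [← sub_nonneg]; field_simp; ring_nf; positivity
      _ ≤ r ^ m := by
          have h : (-2 : ℝ) ≤ -(1 / ((m : ℝ) + 1) ^ 2) := by
            rw [neg_le_neg_iff, div_le_iff₀ (by positivity)]; nlinarith [m.cast_nonneg (α := ℝ)]
          simpa only [r, sub_eq_add_neg] using one_add_mul_le_pow h m
  calc q ^ (m + 1) = q ^ m * q := pow_succ q m
    _ ≤ q ^ m * r ^ m := by gcongr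
    _ = (1 - 1 / ((m : ℝ) + 1)) ^ m := by rw [← mul_pow, hqr]

lemma antitone_one_sub_inv_pow : Antitone fun m : ℕ => (1 - 1 / ((m : ℝ) + 1)) ^ m :=
  antitone_nat_of_succ_le fun m => by
    simpa only [Nat.cast_succ, add_assoc, one_add_one_eq_two] using one_sub_inv_pow_succ_le m

lemma one_sub_inv_pow_pred_le {a k : ℕ} (ha : 1 ≤ a) (hak : a ≤ k) :
    (1 - 1 / (k : ℝ)) ^ (k - 1) ≤ (1 - 1 / (a : ℝ)) ^ (a - 1) := by
  have h := antitone_one_sub_inv_pow (Nat.sub_le_sub_right hak 1)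
  simpa only [Nat.cast_pred (ha.trans hak), Nat.cast_pred ha, sub_add_cancel] using h

lemma one_sub_inv_le_div_sub {a b x : ℝ} (ha : 1 ≤ a) (hab : a ≤ b) (hxa : x < a) :
    1 - 1 / a ≤ (a * b - b + 1 - x) / (a * b - x) := by
  have ha₀ : 0 < a := by linarith
  rw [one_sub_div ha₀.ne', div_le_div_iff₀ ha₀ (by nlinarith)]
  nlinarith

lemma one_sub_inv_pow_pred_le_prod {a b : ℕ} (hab : a ≤ b) :
    (1 - 1 / (a : ℝ)) ^ (a - 1) ≤
      ∏ i ∈ Icc 1 (a - 1), ((((a : ℝ) - 1) * b - a + i + 1) / ((a : ℝ) * b - i)) := by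
  have hreflect : ∏ i ∈ Icc 1 (a - 1), (((a : ℝ) - 1) * b - a + i + 1) =
      ∏ i ∈ Icc 1 (a - 1), ((a : ℝ) * b - b + 1 - i) := by
    refine prod_nbij' (a - ·) (a - ·) ?_ ?_ ?_ ?_ ?_ <;> intro i hi <;>
      simp only [mem_Icc] at hi ⊢
    all_goals try omega
    rw [Nat.cast_sub (by omega)]; ring
  rw [prod_div_distrib, hreflect, ← prod_div_distrib]
  calc (1 - 1 / (a : ℝ)) ^ (a - 1) = ∏ _i ∈ Icc 1 (a - 1), (1 - 1 / (a : ℝ)) := by simp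
    _ ≤ _ := by
      refine prod_le_prod (fun i hi => ?_) (fun i hi => ?_) <;> simp only [mem_Icc] at hi
      · have ha : (1 : ℝ) ≤ a := by exact_mod_cast (by omega : 1 ≤ a)
        rw [sub_nonneg, div_le_one (by linarith)]; exact ha
      · exact one_sub_inv_le_div_sub (by exact_mod_cast (by omega : 1 ≤ a))
          (by exact_mod_cast hab) (by exact_mod_cast (by omega : i < a))

theorem stmt2_general (d k : ℕ) (hd : 1 ≤ d) :
    (1 - 1 / (k : ℝ)) ^ (k - 1) ≤
      ∏ i ∈ Finset.Icc 1 (min (k - 1) (d - 1)),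
        ((((k : ℝ) - 1) * d - k + i + 1) / ((k : ℝ) * d - i)) := by
  rcases le_total k d with hkd | hdk
  · rw [min_eq_left (Nat.sub_le_sub_right hkd 1)]
    exact one_sub_inv_pow_pred_le_prod hkd
  · rw [min_eq_right (Nat.sub_le_sub_right hdk 1)]
    calc (1 - 1 / (k : ℝ)) ^ (k - 1) ≤ (1 - 1 / (d : ℝ)) ^ (d - 1) :=
          one_sub_inv_pow_pred_le hd hdk
      _ ≤ _ := one_sub_inv_pow_pred_le_prod hdk
      _ = _ := prod_congr rfl fun i _ => by ring

/-- For `d ≥ 1`, `k ≥ 2`: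
`∏_{i=1}^{min(k-1,d-1)} ((k-1)d-k+i+1)/(kd-i) ≥ (1-1/k)^(k-1)`. -/
theorem stmt2 (d k : ℕ) (hd : 1 ≤ d) (hk : 2 ≤ k) :
    (1 - 1 / (k : ℝ)) ^ (k - 1) ≤
      ∏ i ∈ Finset.Icc 1 (min (k - 1) (d - 1)),
        ((((k : ℝ) - 1) * d - k + i + 1) / ((k : ℝ) * d - i)) :=
  stmt2_general d k hd
end

section
/- For every integer d ≥ 2, the sequence k ↦ (1 + (k-1)((k-2)/(k-1))^k)/k is monotone decreasing in k (for k ≥ 2) and converges to 1/e as k → ∞. -/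
/-!
For `k ≥ 3` the `k`-th term is `f k = ((k-1)^(k-1) + (k-2)^k) / (k (k-1)^(k-1))`. Clearing
denominators, `f (k+1) ≤ f k` becomes `(k-1)^(2k) ≤ (k(k-1))^(k-1) + (k+1) k^(k-1) (k-2)^k`,
which for `x = k(k-2)` reads `(1+x)^k ≤ (k+x)^(k-1) + x^k + (k-2) x^(k-1)`. Expanding both
powers, the coefficient `C(k, j+1)` of `x^(k-1-j)` on the left is at most the coefficient
`k^j C(k-1, j)` on the right as soon as `j ≥ 1`, since `(j+1) C(k, j+1) = k C(k-1, j)`. At `j = 0`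
the left side is ahead by `(k-1) x^(k-1)`: the extra term absorbs `(k-2) x^(k-1)`, and the
surplus at `j = 1, 2` covers the remaining `x^(k-1)` when `x = k(k-2)`.

The limit comes from `f (m+1) = 1/(m+1) + m/(m+1) · (1 - 1/m)^m · (1 - 1/m)` and
`(1 - 1/m)^m → 1/e`.
-/

open Filter Finset

theorem Nat.choose_succ_le_pow_mul_choose (n k : ℕ) (hk : 1 ≤ k) :
    (n + 1).choose (k + 1) ≤ (n + 1) ^ k * n.choose k :=
  calc (n + 1).choose (k + 1) ≤ (n + 1).choose (k + 1) * (k + 1) :=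
        Nat.le_mul_of_pos_right _ k.succ_pos
    _ = (n + 1) * n.choose k := (Nat.add_one_mul_choose_eq n k).symm
    _ ≤ (n + 1) ^ k * n.choose k := by
      gcongr
      exact Nat.le_self_pow (by omega) _

theorem one_add_pow_le_of_eq_mul (n x : ℕ) (hx : x = (n + 3) * (n + 1)) :
    (1 + x) ^ (n + 3) ≤ (n + 3 + x) ^ (n + 2) + x ^ (n + 3) + (n + 1) * x ^ (n + 2) := by
  rw [add_pow, add_pow]
  simp only [sum_range_succ', Nat.reduceSubDiff, Nat.cast_id, zero_add, Nat.reduceAdd,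
    Nat.choose_one_right, tsub_zero, Nat.choose_zero_right, mul_one, pow_one, pow_zero, one_pow,
    one_mul]
  have tail : ∑ j ∈ range n, x ^ (n - (j + 1)) * (n + 3).choose (j + 1 + 1 + 1 + 1) ≤
      ∑ j ∈ range n,
        (n + 3) ^ (j + 1 + 1 + 1) * x ^ (n - (j + 1)) * (n + 2).choose (j + 1 + 1 + 1) := by
    refine sum_le_sum fun j _ ↦ ?_
    rw [mul_comm ((n + 3) ^ _), mul_assoc]
    exact Nat.mul_le_mul_left _ (Nat.choose_succ_le_pow_mul_choose (n + 2) (j + 3) (by omega))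
  have head : (n + 3).choose 3 + (n + 3).choose 2 * x + x ^ 2 ≤
      (n + 3) * (n + 2) * x + (n + 3) ^ 2 * (n + 2).choose 2 := by
    have h₂ := Nat.add_one_mul_choose_eq (n + 1) 1
    have h₂' := Nat.add_one_mul_choose_eq (n + 2) 1
    have h₃ := Nat.add_one_mul_choose_eq (n + 2) 2
    simp only [Nat.choose_one_right] at h₂ h₂'
    subst hx
    nlinarith
  have := Nat.mul_le_mul_left (x ^ n) head
  rw [pow_succ x (n + 1), pow_succ x n]
  linarith

theorem add_two_pow_two_mul_le (n : ℕ) :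
    (n + 2) ^ (2 * (n + 3)) ≤
      (n + 3) ^ (n + 2) * (n + 2) ^ (n + 2) + (n + 4) * (n + 3) ^ (n + 2) * (n + 1) ^ (n + 3) :=
  calc (n + 2) ^ (2 * (n + 3)) = (1 + (n + 3) * (n + 1)) ^ (n + 3) := by rw [pow_mul]; ring_nf
    _ ≤ (n + 3 + (n + 3) * (n + 1)) ^ (n + 2) + ((n + 3) * (n + 1)) ^ (n + 3)
        + (n + 1) * ((n + 3) * (n + 1)) ^ (n + 2) := one_add_pow_le_of_eq_mul n _ rfl
    _ = _ := by
      rw [show n + 3 + (n + 3) * (n + 1) = (n + 3) * (n + 2) by ring, mul_pow, mul_pow, mul_pow]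
      ring

noncomputable def approxRatio (k : ℕ) : ℝ :=
  (1 + ((k : ℝ) - 1) * (((k : ℝ) - 2) / ((k : ℝ) - 1)) ^ k) / k

theorem approxRatio_add_two (n : ℕ) :
    approxRatio (n + 2) = ((n + 1) ^ (n + 1) + n ^ (n + 2)) / ((n + 2) * (n + 1) ^ (n + 1)) := by
  have : (n : ℝ) + 1 ≠ 0 := by positivity
  simp only [approxRatio]
  push_cast
  rw [show (n : ℝ) + 2 - 2 = n by ring, show (n : ℝ) + 2 - 1 = n + 1 by ring, div_pow]
  field_simp
  ring

theorem approxRatio_succ_le (k : ℕ) (hk : 2 ≤ k) : approxRatio (k + 1) ≤ approxRatio k := by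
  obtain ⟨n, rfl⟩ := Nat.exists_eq_add_of_le' hk
  rcases n with _ | m
  · norm_num [approxRatio]
  show approxRatio ((m + 2) + 2) ≤ approxRatio ((m + 1) + 2)
  rw [approxRatio_add_two, approxRatio_add_two, div_le_div_iff₀ (by positivity) (by positivity)]
  have key : ((m : ℝ) + 2) ^ (2 * (m + 3)) ≤ (m + 3) ^ (m + 2) * (m + 2) ^ (m + 2)
      + (m + 4) * (m + 3) ^ (m + 2) * (m + 1) ^ (m + 3) := by
    exact_mod_cast add_two_pow_two_mul_le m
  push_cast
  linear_combination ((m : ℝ) + 3) * key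

theorem approxRatio_antitoneOn : AntitoneOn approxRatio (Set.Ici 2) :=
  antitoneOn_nat_Ici_of_succ_le approxRatio_succ_le

theorem tendsto_approxRatio : Tendsto approxRatio atTop (nhds (Real.exp (-1))) := by
  rw [← tendsto_add_atTop_iff_nat 1]
  have hlim : Tendsto
      (fun m : ℕ ↦ 1 / ((m : ℝ) + 1) + m / (m + 1) * ((1 + (-1) / m) ^ m * (1 + (-1) / m)))
      atTop (nhds (0 + 1 * (Real.exp (-1) * (1 + 0)))) := by
    refine tendsto_one_div_add_atTop_nhds_zero_nat.add ((tendsto_natCast_div_add_atTop 1).mul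
      ((Real.tendsto_one_add_div_pow_exp (-1)).mul (tendsto_const_nhds.add ?_)))
    simpa using tendsto_const_div_atTop_nhds_zero_nat (-1 : ℝ)
  simp only [zero_add, add_zero, one_mul, mul_one] at hlim
  refine hlim.congr' ?_
  filter_upwards [eventually_ne_atTop 0] with m hm
  have : (m : ℝ) ≠ 0 := by exact_mod_cast hm
  simp only [approxRatio]
  push_cast
  rw [add_sub_cancel_right, show ((m : ℝ) + 1 - 2) / m = 1 + (-1) / m by field_simp; ring]
  ring

theorem stmt7_general :
    (∀ k₁ k₂ : ℕ, 2 ≤ k₁ → k₁ ≤ k₂ →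
      (1 + ((k₂ : ℝ) - 1) * (((k₂ : ℝ) - 2) / ((k₂ : ℝ) - 1)) ^ k₂) / k₂ ≤
      (1 + ((k₁ : ℝ) - 1) * (((k₁ : ℝ) - 2) / ((k₁ : ℝ) - 1)) ^ k₁) / k₁) ∧
    Tendsto (fun k : ℕ =>
        (1 + ((k : ℝ) - 1) * (((k : ℝ) - 2) / ((k : ℝ) - 1)) ^ k) / k)
      atTop (nhds (1 / Real.exp 1)) := by
  refine ⟨fun k₁ k₂ h₁ h₁₂ ↦ approxRatio_antitoneOn h₁ (h₁.trans h₁₂) h₁₂, ?_⟩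
  rw [one_div, ← Real.exp_neg]
  exact tendsto_approxRatio

/-- For every integer `d ≥ 2`, the sequence `k ↦ (1+(k-1)((k-2)/(k-1))^k)/k`
is monotone decreasing in `k` (for `k ≥ 2`) and converges to `1/e`. -/
theorem stmt7 (d : ℕ) (hd : 2 ≤ d) :
    (∀ k₁ k₂ : ℕ, 2 ≤ k₁ → k₁ ≤ k₂ →
      (1 + ((k₂ : ℝ) - 1) * (((k₂ : ℝ) - 2) / ((k₂ : ℝ) - 1)) ^ k₂) / k₂ ≤
      (1 + ((k₁ : ℝ) - 1) * (((k₁ : ℝ) - 2) / ((k₁ : ℝ) - 1)) ^ k₁) / k₁) ∧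
    Tendsto (fun k : ℕ =>
        (1 + ((k : ℝ) - 1) * (((k : ℝ) - 2) / ((k : ℝ) - 1)) ^ k) / k)
      atTop (nhds (1 / Real.exp 1)) :=
  stmt7_general
end

section
/- Let n = kd + r with 0 ≤ r < d. Suppose M ⊆ E is a subset of edges of a bipartite graph G = (S,T;E) with |S| = n such that every node of S has degree at most 1 in M, every node of T has degree at most k+1 in M, and at most r nodes of T have degree exactly k+1 in M. Then there exists an ordering s_1,…,s_n of S under which M is a feasible d-distance matching, i.e., for every t ∈ T and any two distinct edges s_i t, s_j t ∈ M, |i - j| ≥ d. -/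
/-!
Colour every `s ∈ S` by its `M`-neighbour, and every unmatched `s` by itself. It then suffices
to write down a word in which colour `a` occurs `w a ≤ k + 1` times, at most `r` colours occur
exactly `k + 1` times, the length is `k * d + r`, and equal letters are at least `d` apart.

This goes by induction on `k`. Pick `d` distinct colours `D` that contain every colour of
multiplicity `k + 1`, and either all colours of multiplicity `≥ k` or only such colours. Removing
one copy of each colour in `D` leaves data for `k - 1`, which gives a word `L`. Now put `D` in
front of `L`, listing each colour no later than its first occurrence in `L`.
-/

open Finset

namespace List

variable {α : Type*}

def IsSpaced (d : ℕ) (L : List α) : Prop :=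
  ∀ i j (hi : i < L.length) (hj : j < L.length), i < j → L[i] = L[j] → i + d ≤ j

theorem Nodup.isSpaced {L : List α} (hL : L.Nodup) (d : ℕ) : L.IsSpaced d :=
  fun _ _ _ _ hij h => absurd (hL.getElem_inj_iff.1 h) hij.ne

theorem IsSpaced.le_abs_sub {d : ℕ} {L : List α} (hL : L.IsSpaced d) {i j : ℕ}
    (hi : i < L.length) (hj : j < L.length) (hij : i ≠ j) (h : L[i] = L[j]) :
    (d : ℤ) ≤ |(i : ℤ) - j| := by
  rcases hij.lt_or_gt with hij | hij
  · have := hL i j hi hj hij h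
    rw [abs_sub_comm, abs_of_nonneg (by omega)]
    omega
  · have := hL j i hj hi hij h.symm
    rw [abs_of_nonneg (by omega)]
    omega

theorem IsSpaced.nodup_append {d : ℕ} {P L : List α} (hP : P.Nodup) (hd : d ≤ P.length)
    (hL : L.IsSpaced d)
    (hPL : ∀ i j (hi : i < P.length) (hj : j < L.length), P[i] = L[j] → i ≤ j) :
    (P ++ L).IsSpaced d := by
  intro i j hi hj hij h
  rw [length_append] at hi hj
  by_cases hjP : j < P.length
  · rw [getElem_append_left (hij.trans hjP), getElem_append_left hjP] at h
    exact absurd (hP.getElem_inj_iff.1 h) hij.ne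
  by_cases hiP : i < P.length
  · rw [getElem_append_left hiP, getElem_append_right (not_lt.1 hjP)] at h
    have := hPL i (j - P.length) hiP (by omega) h
    omega
  · rw [getElem_append_right (not_lt.1 hiP), getElem_append_right (not_lt.1 hjP)] at h
    have := hL _ _ (by omega) (by omega) (by omega) h
    omega

end List

namespace Finset

theorem exists_list_nodup_index_le {α : Type*} [DecidableEq α] (D : Finset α) (L : List α) :
    ∃ P : List α, P.Nodup ∧ (∀ a, a ∈ P ↔ a ∈ D) ∧
      ∀ i j (hi : i < P.length) (hj : j < L.length), P[i] = L[j] → i ≤ j := by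
  induction L generalizing D with
  | nil => exact ⟨D.toList, D.nodup_toList, fun _ => mem_toList, fun _ _ _ hj => by simp at hj⟩
  | cons b L ih =>
    by_cases hb : b ∈ D
    · obtain ⟨P, hPnd, hPmem, hPL⟩ := ih (D.erase b)
      refine ⟨b :: P, List.nodup_cons.2 ⟨fun h => by simpa using (hPmem b).1 h, hPnd⟩,
        fun a => ?_, ?_⟩
      · by_cases hab : a = b <;> simp [hab, hPmem, hb]
      · rintro (_ | i) (_ | j) hi hj h
        · rfl
        · omega
        · have := (hPmem _).1 (List.getElem_mem (l := P) (by simpa using hi))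
          simp_all
        · have := hPL i j (by simpa using hi) (by simpa using hj) (by simpa using h)
          omega
    · obtain ⟨P, hPnd, hPmem, hPL⟩ := ih D
      refine ⟨P, hPnd, hPmem, ?_⟩
      rintro i (_ | j) hi hj h
      · exact absurd ((hPmem _).1 (h ▸ List.getElem_mem _)) (by simpa using hb)
      · exact (hPL i j hi (by simpa using hj) h).trans j.le_succ

theorem exists_subsuperset_card_eq_comparable {α : Type*} {A U V : Finset α} {d : ℕ}
    (hAU : A ⊆ U) (hUV : U ⊆ V) (hA : #A ≤ d) (hV : d ≤ #V) :
    ∃ D, A ⊆ D ∧ D ⊆ V ∧ #D = d ∧ (D ⊆ U ∨ U ⊆ D) := by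
  by_cases hU : d ≤ #U
  · obtain ⟨D, hAD, hDU, hD⟩ := exists_subsuperset_card_eq hAU hA hU
    exact ⟨D, hAD, hDU.trans hUV, hD, .inl hDU⟩
  · obtain ⟨D, hUD, hDV, hD⟩ := exists_subsuperset_card_eq hUV (not_le.1 hU).le hV
    exact ⟨D, hAU.trans hUD, hDV, hD, .inr hUD⟩

end Finset

section Multiplicities

variable {α : Type*} [Fintype α] (w : α → ℕ)

theorem sum_le_mul_card_add_card {m : ℕ} (hw : ∀ a, w a ≤ m + 1) :
    ∑ a, w a ≤ m * #{a | 0 < w a} + #{a | w a = m + 1} := by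
  rw [card_filter, card_filter, mul_sum, ← sum_add_distrib]
  refine sum_le_sum fun a _ => ?_
  have := hw a
  split_ifs <;> omega

theorem mul_card_add_card_le_sum (m : ℕ) :
    m * #{a | m ≤ w a} + #{a | w a = m + 1} ≤ ∑ a, w a := by
  rw [card_filter, card_filter, mul_sum, ← sum_add_distrib]
  refine sum_le_sum fun a _ => ?_
  split_ifs <;> omega

variable [DecidableEq α] {d m r : ℕ}

theorem exists_first_block (hm : 0 < m) (hr : r < d) (hw : ∀ a, w a ≤ m + 1)
    (hheavy : #{a | w a = m + 1} ≤ r) (hsum : ∑ a, w a = m * d + r) :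
    ∃ D : Finset α, #D = d ∧ (∀ a ∈ D, 0 < w a) ∧
      ({a | w a = m + 1} : Finset α) ⊆ D ∧
      #{a | w a = m + 1} + #(({a | m ≤ w a} : Finset α) \ D) ≤ r := by
  have hAU : ({a | w a = m + 1} : Finset α) ⊆ ({a | m ≤ w a} : Finset α) :=
    fun a ha => by simp only [mem_filter, mem_univ, true_and] at ha ⊢; omega
  have hUV : ({a | m ≤ w a} : Finset α) ⊆ ({a | 0 < w a} : Finset α) :=
    fun a ha => by simp only [mem_filter, mem_univ, true_and] at ha ⊢; omega
  have hV : d ≤ #{a | 0 < w a} :=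
    Nat.le_of_mul_le_mul_left (by linarith [sum_le_mul_card_add_card w hw]) hm
  obtain ⟨D, hAD, hDV, hD, hDU | hUD⟩ :=
    exists_subsuperset_card_eq_comparable hAU hUV (hheavy.trans hr.le) hV
  · refine ⟨D, hD, fun a ha => by simpa using hDV ha, hAD, ?_⟩
    have hU := mul_card_add_card_le_sum w m
    obtain ⟨x, hx⟩ := Nat.exists_eq_add_of_le (hD ▸ card_le_card hDU)
    rw [card_sdiff_of_subset hDU, hD, hx, Nat.add_sub_cancel_left]
    rw [hx] at hU
    nlinarith
  · refine ⟨D, hD, fun a ha => by simpa using hDV ha, hAD, ?_⟩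
    simpa [sdiff_eq_empty_iff_subset.2 hUD] using hheavy

theorem exists_block_tsub (hm : 0 < m) (hr : r < d) (hw : ∀ a, w a ≤ m + 1)
    (hheavy : #{a | w a = m + 1} ≤ r) (hsum : ∑ a, w a = m * d + r) :
    ∃ D : Finset α, #D = d ∧ (∀ a ∈ D, 0 < w a) ∧
      (∀ a, w a - (if a ∈ D then 1 else 0) ≤ m) ∧
      #{a | w a - (if a ∈ D then 1 else 0) = m} ≤ r := by
  obtain ⟨D, hD, hDpos, hAD, hbound⟩ := exists_first_block w hm hr hw hheavy hsum
  have hAD' : ∀ a, a ∉ D → w a ≠ m + 1 := fun a haD h => haD (hAD (by simpa using h))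
  refine ⟨D, hD, hDpos, fun a => ?_,
    (card_le_card fun a ha => ?_).trans ((card_union_le _ _).trans hbound)⟩
  · have := hw a
    by_cases haD : a ∈ D
    · simp only [haD, if_true]; omega
    · simp only [haD, if_false, Nat.sub_zero]; have := hAD' a haD; omega
  · simp only [mem_filter, mem_univ, true_and] at ha
    simp only [mem_union, mem_sdiff, mem_filter, mem_univ, true_and]
    by_cases haD : a ∈ D
    · simp only [haD, if_true] at ha
      exact .inl (by have := hDpos a haD; omega)
    · simp only [haD, if_false, Nat.sub_zero] at ha
      exact .inr ⟨ha.ge, haD⟩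

theorem exists_isSpaced_count_eq (hr : r < d) (k : ℕ) (hw : ∀ a, w a ≤ k + 1)
    (hheavy : #{a | w a = k + 1} ≤ r) (hsum : ∑ a, w a = k * d + r) :
    ∃ L : List α, (∀ a, L.count a = w a) ∧ L.IsSpaced d := by
  induction k generalizing w with
  | zero =>
    refine ⟨({a | 0 < w a} : Finset α).toList, fun a => ?_, (nodup_toList _).isSpaced d⟩
    have := hw a
    rw [(nodup_toList _).count]
    simp only [mem_toList, mem_filter, mem_univ, true_and]
    split_ifs <;> omega
  | succ k ih =>
    obtain ⟨D, hD, hDpos, hw', hheavy'⟩ := exists_block_tsub w k.add_one_pos hr hw hheavy hsum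
    set w' : α → ℕ := fun a => w a - if a ∈ D then 1 else 0
    have hww' : ∀ a, w a = w' a + if a ∈ D then 1 else 0 := by
      intro a
      by_cases haD : a ∈ D
      · simp only [w', haD, if_true]; have := hDpos a haD; omega
      · simp only [w', haD, if_false, Nat.sub_zero, add_zero]
    have hsum' : ∑ a, w' a = k * d + r := by
      have : ∑ a, w a = ∑ a, w' a + #D := by
        rw [sum_congr rfl fun a _ => hww' a, sum_add_distrib, sum_boole, filter_mem_eq_inter,
          univ_inter, Nat.cast_id]
      rw [hsum, hD] at this
      linarith
    obtain ⟨L, hLcount, hL⟩ := ih w' hw' hheavy' hsum'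
    obtain ⟨P, hPnd, hPmem, hPL⟩ := D.exists_list_nodup_index_le L
    refine ⟨P ++ L, fun a => ?_, hL.nodup_append hPnd ?_ hPL⟩
    · rw [List.count_append, hPnd.count, hLcount, hww' a, add_comm]
      simp only [hPmem]
    · rw [← hD, ← List.toFinset_card_of_nodup hPnd]
      exact card_le_card fun a ha => by simpa [hPmem] using ha

end Multiplicities

theorem exists_spaced_equiv_fin_of_card_fiber {S β : Type*} [Fintype S] [Fintype β]
    [DecidableEq β] (c : S → β) {n d k r : ℕ} (hn : Fintype.card S = n) (hnkr : n = k * d + r)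
    (hr : r < d) (hc : ∀ b, #{s | c s = b} ≤ k + 1)
    (hheavy : #{b | #{s | c s = b} = k + 1} ≤ r) :
    ∃ σ : S ≃ Fin n, ∀ s s', c s = c s' → s ≠ s' →
      (d : ℤ) ≤ |((σ s : ℕ) : ℤ) - ((σ s' : ℕ) : ℤ)| := by
  have hsum : ∑ b, #{s | c s = b} = k * d + r := by
    rw [← card_eq_sum_card_fiberwise fun s _ => mem_univ (c s), card_univ, hn, hnkr]
  obtain ⟨L, hcount, hL⟩ := exists_isSpaced_count_eq _ hr k hc hheavy hsum
  have hfiber : ∀ b, {s // c s = b} ≃ {i : Fin L.length // L[i] = b} := fun b =>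
    Fintype.equivOfCardEq <| by
      rw [Fintype.card_subtype, Fintype.card_subtype, ← hcount]
      exact (Fin.card_filter_univ_eq_vector_get_eq_count b ⟨L, rfl⟩).symm
  set τ : S ≃ Fin L.length := Equiv.ofFiberEquiv hfiber
  have hlen : L.length = n := by simpa [hn] using (Fintype.card_congr τ).symm
  refine ⟨τ.trans (finCongr hlen), fun s s' hcs hss' => ?_⟩
  have hτ : ∀ s, L[(τ s : ℕ)] = c s := Equiv.ofFiberEquiv_map hfiber
  simpa using hL.le_abs_sub (τ s).isLt (τ s').isLt (fun h => hss' (τ.injective (Fin.ext h)))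
    (by rw [hτ, hτ, hcs])

section MatchingColor

variable {S T : Type*} (M : Finset (S × T))

open Classical in
noncomputable def matchingColor (s : S) : T ⊕ S :=
  if h : ∃ t, (s, t) ∈ M then .inl h.choose else .inr s

variable {M}

theorem matchingColor_eq_inl (hM : ∀ s t t', (s, t) ∈ M → (s, t') ∈ M → t = t')
    {s : S} {t : T} (h : (s, t) ∈ M) : matchingColor M s = .inl t := by
  have hex : ∃ t, (s, t) ∈ M := ⟨t, h⟩
  rw [matchingColor, dif_pos hex, hM s _ _ hex.choose_spec h]

theorem mem_of_matchingColor_eq_inl {s : S} {t : T} (h : matchingColor M s = .inl t) :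
    (s, t) ∈ M := by
  unfold matchingColor at h
  split_ifs at h with hex
  exact Sum.inl_injective h ▸ hex.choose_spec

theorem eq_of_matchingColor_eq_inr {s s' : S} (h : matchingColor M s = .inr s') : s = s' := by
  unfold matchingColor at h
  split_ifs at h
  exact Sum.inr_injective h

variable [Fintype S] [DecidableEq S] [DecidableEq T]

theorem card_matchingColor_fiber_inl_le (t : T) :
    #{s | matchingColor M s = .inl t} ≤ #{e ∈ M | e.2 = t} :=
  card_le_card_of_injOn (fun s => (s, t))
    (fun s hs => by simpa using mem_of_matchingColor_eq_inl (by simpa using hs))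
    (fun _ _ _ _ h => congrArg Prod.fst h)

theorem card_matchingColor_fiber_inr_le (s' : S) : #{s | matchingColor M s = .inr s'} ≤ 1 :=
  card_le_one.2 fun _ h₁ _ h₂ => by
    simp only [mem_filter, mem_univ, true_and] at h₁ h₂
    rw [eq_of_matchingColor_eq_inr h₁, eq_of_matchingColor_eq_inr h₂]

theorem card_heavy_matchingColor_le [Fintype T] {k r : ℕ} (hk : 0 < k)
    (hT : ∀ t, #{e ∈ M | e.2 = t} ≤ k + 1) (hTr : #{t | #{e ∈ M | e.2 = t} = k + 1} ≤ r) :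
    #{b | #{s | matchingColor M s = b} = k + 1} ≤ r := by
  refine (card_le_card fun b hb => ?_).trans ((card_image_le (f := Sum.inl)).trans hTr)
  rw [mem_filter] at hb
  rcases b with t | s
  · have := card_matchingColor_fiber_inl_le (M := M) t
    exact mem_image_of_mem _ (mem_filter.2 ⟨mem_univ t, le_antisymm (hT t) (hb.2 ▸ this)⟩)
  · have := card_matchingColor_fiber_inr_le (M := M) s
    omega

end MatchingColor

theorem stmt11_general {S T : Type*} [Fintype S] [DecidableEq S] [Fintype T] [DecidableEq T]
    (M : Finset (S × T)) (n d k r : ℕ)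
    (hn : Fintype.card S = n) (hnkr : n = k * d + r) (hr : r < d)
    (hS : ∀ s : S, (M.filter (fun e => e.1 = s)).card ≤ 1)
    (hT : ∀ t : T, (M.filter (fun e => e.2 = t)).card ≤ k + 1)
    (hTr : (Finset.univ.filter
        (fun t : T => (M.filter (fun e => e.2 = t)).card = k + 1)).card ≤ r) :
    ∃ σ : S ≃ Fin n, ∀ e ∈ M, ∀ e' ∈ M, e.2 = e'.2 → e.1 ≠ e'.1 →
      (d : ℤ) ≤ |(((σ e.1 : Fin n) : ℕ) : ℤ) - (((σ e'.1 : Fin n) : ℕ) : ℤ)| := by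
  have hM : ∀ s t t', (s, t) ∈ M → (s, t') ∈ M → t = t' := fun s _ _ h h' =>
    congrArg Prod.snd <|
      card_le_one.1 (hS s) _ (mem_filter.2 ⟨h, rfl⟩) _ (mem_filter.2 ⟨h', rfl⟩)
  have hc : ∀ b, #{s | matchingColor M s = b} ≤ k + 1
    | .inl t => (card_matchingColor_fiber_inl_le t).trans (hT t)
    | .inr s => (card_matchingColor_fiber_inr_le s).trans (by omega)
  have hheavy : #{b | #{s | matchingColor M s = b} = k + 1} ≤ r := by
    obtain rfl | hk := Nat.eq_zero_or_pos k
    · -- for `k = 0` the heavy colours are at most as many as the `n = r` vertices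
      have := mul_card_add_card_le_sum (fun b => #{s | matchingColor M s = b}) 0
      rw [← card_eq_sum_card_fiberwise fun s _ => mem_univ _, card_univ] at this
      omega
    · exact card_heavy_matchingColor_le hk hT hTr
  obtain ⟨σ, hσ⟩ := exists_spaced_equiv_fin_of_card_fiber _ hn hnkr hr hc hheavy
  refine ⟨σ, fun e he e' he' ht hne => hσ _ _ ?_ hne⟩
  rw [matchingColor_eq_inl hM he, matchingColor_eq_inl hM he', ht]

/-- If `|S| = n = kd + r` with `0 ≤ r < d` and `M` is an edge set of a bipartite graph
`(S,T)` in which every `s ∈ S` has degree at most `1`, every `t ∈ T` has degree at most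
`k+1`, and at most `r` nodes of `T` have degree exactly `k+1`, then there is an ordering
of `S` under which `M` is a feasible `d`-distance matching. -/
theorem stmt11 {S T : Type*} [Fintype S] [DecidableEq S] [Fintype T] [DecidableEq T]
    (M : Finset (S × T)) (n d k r : ℕ) (hd : 1 ≤ d)
    (hn : Fintype.card S = n) (hnkr : n = k * d + r) (hr : r < d)
    (hS : ∀ s : S, (M.filter (fun e => e.1 = s)).card ≤ 1)
    (hT : ∀ t : T, (M.filter (fun e => e.2 = t)).card ≤ k + 1)
    (hTr : (Finset.univ.filter
        (fun t : T => (M.filter (fun e => e.2 = t)).card = k + 1)).card ≤ r) :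
    ∃ σ : S ≃ Fin n, ∀ e ∈ M, ∀ e' ∈ M, e.2 = e'.2 → e.1 ≠ e'.1 →
      (d : ℤ) ≤ |(((σ e.1 : Fin n) : ℕ) : ℤ) - (((σ e'.1 : Fin n) : ℕ) : ℤ)| :=
  stmt11_general M n d k r hn hnkr hr hS hT hTr
end

section
/- Let n = kd + r with 0 ≤ r < d. Suppose M ⊆ E is a subset of edges of a bipartite graph G = (S,T;E) with |S| = n such that every node of S has degree at most 1 in M and every node of T has degree at most k in M. Then there exists a cyclic ordering s_1,…,s_n of S under which M is a feasible cyclic d-distance matching: for every t ∈ T and distinct edges s_i t, s_j t ∈ M, the cyclic distance between i and j (i.e., min(|i-j|, n - |i-j|)) is at least d. -/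
/-!
Lay the elements of `S` out row by row in a grid with `k` columns so that the elements sharing a
partner `t ∈ T` occupy consecutive cells, classes with exactly `k` elements filling whole rows
(sort the classes by decreasing size). Then read the grid column by column: the columns have
`⌊n/k⌋` or `⌊n/k⌋ + 1` cells, and two cells of a class lie in different columns, either in the
same row or in consecutive rows with at least one column between them. In both cases their
positions in the column-major reading differ by at least `⌊n/k⌋ ≥ d` both ways round the cycle.
-/

open Finset

/-- When `n` cells are laid out row by row in `k` columns, the first `n % k` columns have
`n / k + 1` cells and the others `n / k`; `colStart k n v` is the position of the top cell of column
`v` in the column-by-column reading, and `colMajor k n m` that of the cell `m`. -/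
def colStart (k n v : ℕ) : ℕ := v * (n / k) + min v (n % k)

def colMajor (k n m : ℕ) : ℕ := colStart k n (m % k) + m / k

section ColumnMajor

variable {k n : ℕ}

theorem colStart_add_div_le_succ (v : ℕ) : colStart k n v + n / k ≤ colStart k n (v + 1) := by
  simp only [colStart, add_mul, one_mul]
  omega

theorem colStart_mono : Monotone (colStart k n) := fun v w h => by
  have := Nat.mul_le_mul_right (n / k) h
  simp only [colStart]
  omega

theorem colStart_self (hk : 0 < k) : colStart k n k = n := by
  have := Nat.mod_lt n hk
  rw [colStart, min_eq_right this.le, Nat.div_add_mod]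

theorem colMajor_lt_colStart_succ (hk : 0 < k) {m : ℕ} (hm : m < n) :
    colMajor k n m < colStart k n (m % k + 1) := by
  have hmk := Nat.mod_lt m hk
  have hnk := Nat.mod_lt n hk
  have hm' : k * (m / k) + m % k < k * (n / k) + n % k := by rwa [Nat.div_add_mod, Nat.div_add_mod]
  have hrow : m / k ≤ n / k := Nat.div_le_div_right hm.le
  simp only [colMajor, colStart, add_mul, one_mul]
  rcases hrow.lt_or_eq with h | h
  · omega
  · rw [h] at hm' ⊢
    omega

theorem colMajor_lt (hk : 0 < k) {m : ℕ} (hm : m < n) : colMajor k n m < n :=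
  calc colMajor k n m < colStart k n (m % k + 1) := colMajor_lt_colStart_succ hk hm
    _ ≤ colStart k n k := colStart_mono (Nat.mod_lt m hk)
    _ = n := colStart_self hk

theorem colMajor_injOn (hk : 0 < k) {m m' : ℕ} (hm : m < n) (hm' : m' < n)
    (h : colMajor k n m = colMajor k n m') : m = m' := by
  have key : ∀ {a b : ℕ}, a < n → a % k < b % k → colMajor k n a < colMajor k n b :=
    fun {a b} ha hab => calc
      colMajor k n a < colStart k n (a % k + 1) := colMajor_lt_colStart_succ hk ha
      _ ≤ colStart k n (b % k) := colStart_mono hab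
      _ ≤ colMajor k n b := Nat.le_add_right _ _
  have hcol : m % k = m' % k := by
    by_contra hne
    rcases Nat.lt_or_gt_of_ne hne with hlt | hlt
    · exact (key hm hlt).ne h
    · exact (key hm' hlt).ne h.symm
  have hrow : m / k = m' / k := by simpa [colMajor, hcol] using h
  rw [← Nat.div_add_mod m k, ← Nat.div_add_mod m' k, hcol, hrow]

noncomputable def colMajorEquiv (hk : 0 < k) : Fin n ≃ Fin n :=
  Equiv.ofBijective (fun m => ⟨colMajor k n m, colMajor_lt hk m.2⟩) <|
    Finite.injective_iff_bijective.mp fun a b h =>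
      Fin.ext (colMajor_injOn hk a.2 b.2 (congrArg Fin.val h))

end ColumnMajor

def cyclicDist (n x y : ℕ) : ℤ := min |(x : ℤ) - y| (n - |(x : ℤ) - y|)

theorem cyclicDist_comm (n x y : ℕ) : cyclicDist n x y = cyclicDist n y x := by
  rw [cyclicDist, abs_sub_comm, cyclicDist]

theorem le_cyclicDist {n D x y : ℕ} (h : D + x ≤ y) (h' : y + D ≤ n + x) :
    (D : ℤ) ≤ cyclicDist n x y := by
  rw [cyclicDist, abs_sub_comm, abs_of_nonneg (by omega)]
  omega

/-- Cells `i < j` of a row-major layout with `k` columns lie in a block of at most `k` consecutive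
cells, and a block of exactly `k` cells is a whole row. -/
def InRowWindow (k i j : ℕ) : Prop := j < i + k ∧ (j + 1 = i + k → k ∣ i)

theorem div_le_cyclicDist_colMajor {k n i j : ℕ} (hk : 0 < k) (hij : i < j) (hjn : j < n)
    (hw : InRowWindow k i j) :
    ((n / k : ℕ) : ℤ) ≤ cyclicDist n (colMajor k n i) (colMajor k n j) := by
  obtain ⟨hjk, halign⟩ := hw
  have hrow : i / k ≤ j / k ∧ j / k ≤ i / k + 1 := by
    refine ⟨Nat.div_le_div_right hij.le, ?_⟩
    calc j / k ≤ (i + k) / k := Nat.div_le_div_right hjk.le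
      _ = i / k + 1 := Nat.add_div_right i hk
  have hi := Nat.div_add_mod i k
  have hj := Nat.div_add_mod j k
  have himod := Nat.mod_lt i hk
  have hjmod := Nat.mod_lt j hk
  have hin := colMajor_lt_colStart_succ hk (hij.trans hjn)
  have hjn' := colMajor_lt_colStart_succ hk hjn
  have hend_i : colStart k n (i % k + 1) ≤ n := (colStart_mono himod).trans_eq (colStart_self hk)
  have hend_j : colStart k n (j % k + 1) ≤ n := (colStart_mono hjmod).trans_eq (colStart_self hk)
  unfold colMajor at *
  rcases hrow.1.eq_or_lt with hsame | hnext
  -- in the same row `j` lies in a later column than `i`; in the next row it lies at least two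
  -- columns before `i`, as adjacent columns would make the window a misaligned block of `k` cells
  · have hcol : i % k + 1 ≤ j % k := by
      rw [hsame] at hi; omega
    have := colStart_mono (k := k) (n := n) hcol
    have := colStart_add_div_le_succ (k := k) (n := n) (i % k)
    have := colStart_add_div_le_succ (k := k) (n := n) (j % k)
    apply le_cyclicDist <;> omega
  · have hnext : j / k = i / k + 1 := by omega
    rw [hnext, mul_add, mul_one] at hj
    have hcol : j % k + 2 ≤ i % k := by
      by_contra hadj
      have hdvd := halign (by omega)
      rw [Nat.dvd_iff_mod_eq_zero] at hdvd
      omega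
    have hD : 0 < n / k := Nat.div_pos (by omega) hk
    have := colStart_mono (k := k) (n := n) hcol
    have := colStart_add_div_le_succ (k := k) (n := n) (i % k)
    have := colStart_add_div_le_succ (k := k) (n := n) (j % k)
    have : colStart k n (j % k + 1) + n / k ≤ colStart k n (j % k + 2) :=
      colStart_add_div_le_succ _
    rw [cyclicDist_comm]
    apply le_cyclicDist <;> omega

theorem Finset.dvd_card_of_card_fiber_eq {ι β : Type*} [DecidableEq β] {g : ι → β}
    {s : Finset ι} {k : ℕ} (hs : ∀ x ∈ s, #{y ∈ s | g y = g x} = k) : k ∣ #s := by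
  rw [card_eq_sum_card_image g s]
  refine dvd_sum fun b hb => ?_
  obtain ⟨x, hx, rfl⟩ := mem_image.mp hb
  rw [hs x hx]

theorem Monotone.inRowWindow_of_eq {n k : ℕ} {β : Type*} [LinearOrder β] {g : Fin n → β}
    (hg : Monotone g) (hk : ∀ m, #{x | g x = g m} ≤ k)
    (hfull : ∀ m m', g m < g m' → #{x | g x = g m'} = k → #{x | g x = g m} = k)
    {i j : Fin n} (hij : i < j) (heq : g i = g j) : InRowWindow k i j := by
  have hsub : Icc i j ⊆ ({x | g x = g i} : Finset (Fin n)) := fun m hm => by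
    rw [mem_Icc] at hm
    simp only [mem_filter, mem_univ, true_and]
    exact le_antisymm (heq ▸ hg hm.2) (hg hm.1)
  have hcard : #(Icc i j) = (j : ℕ) + 1 - i := Fin.card_Icc i j
  have hki := hk i
  have hle := card_le_card hsub
  refine ⟨by omega, fun hji => ?_⟩
  have hIcc : Icc i j = ({x | g x = g i} : Finset (Fin n)) :=
    eq_of_subset_of_card_le hsub (by omega)
  -- the cells before a full class are those of smaller value, a union of full classes
  have hbefore : Iio i = ({x | g x < g i} : Finset (Fin n)) := by
    ext m
    simp only [mem_Iio, mem_filter, mem_univ, true_and]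
    refine ⟨fun hm => (hg hm.le).lt_of_ne fun h => ?_,
      fun h => lt_of_not_ge fun hm => (hg hm).not_gt h⟩
    have : m ∈ Icc i j := by rw [hIcc]; simp [h]
    exact (mem_Icc.mp this).1.not_gt hm
  rw [← Fin.card_Iio i, hbefore]
  refine dvd_card_of_card_fiber_eq (g := g) fun x hx => ?_
  have hx : g x < g i := by simpa using hx
  have : ({y ∈ {x | g x < g i} | g y = g x} : Finset (Fin n)) =
      ({y | g y = g x} : Finset (Fin n)) := by
    ext y
    simp only [mem_filter, mem_univ, true_and, and_iff_right_iff_imp]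
    exact fun h => h ▸ hx
  rw [this]
  exact hfull x i hx (by rw [← hIcc]; omega)

theorem exists_equiv_fin_inRowWindow {S α : Type*} [Fintype S] [Fintype α] [DecidableEq α]
    {n k : ℕ} (c : S → α) (hn : Fintype.card S = n) (hc : ∀ a, #{s | c s = a} ≤ k) :
    ∃ σ : S ≃ Fin n, ∀ a b, c a = c b → σ a < σ b → InRowWindow k (σ a) (σ b) := by
  -- sorting by `key` makes each class a block of consecutive positions, the full classes first
  let key : S → ℕ ×ₗ ℕ := fun s => toLex (k - #{s' | c s' = c s}, Fintype.equivFin α (c s))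
  have hkey : ∀ s s', key s' = key s ↔ c s' = c s := fun s s' =>
    ⟨fun h => (Fintype.equivFin α).injective (Fin.ext (Prod.ext_iff.mp (toLex.injective h)).2),
      fun h => by simp only [key, h]⟩
  let e := Fintype.equivFinOfCardEq hn
  let σ : S ≃ Fin n := e.trans (Tuple.sort (key ∘ e.symm)).symm
  have hfiber : ∀ s, #{m | key (σ.symm m) = key s} = #{s' | c s' = c s} := fun s =>
    card_equiv σ.symm fun m => by simp [hkey]
  have hg : Monotone (key ∘ σ.symm) := Tuple.monotone_sort (key ∘ e.symm)
  refine ⟨σ, fun a b hab hlt => hg.inRowWindow_of_eq (fun m => ?_) (fun m m' hlt' hfull => ?_) hlt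
    (by simp [hkey, hab])⟩
  · simpa only [Function.comp_apply, hfiber] using hc _
  · simp only [Function.comp_apply, hfiber] at hfull ⊢
    have := (Prod.Lex.toLex_lt_toLex'.mp hlt').1
    have := hc (c (σ.symm m))
    omega

section Partner

variable {S T : Type*} (M : Finset (S × T))

open Classical in
noncomputable def partnerClass (s : S) : S ⊕ T :=
  if h : ∃ t, (s, t) ∈ M then .inr h.choose else .inl s

theorem partnerClass_of_mem [DecidableEq S]
    (hS : ∀ s : S, (M.filter (fun e => e.1 = s)).card ≤ 1) {e : S × T} (he : e ∈ M) :
    partnerClass M e.1 = .inr e.2 := by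
  have hex : ∃ t, (e.1, t) ∈ M := ⟨e.2, he⟩
  rw [partnerClass, dif_pos hex]
  have := card_le_one.mp (hS e.1) _ (mem_filter.mpr ⟨hex.choose_spec, rfl⟩) _
    (mem_filter.mpr ⟨he, rfl⟩)
  exact congrArg (fun x : S × T => (Sum.inr x.2 : S ⊕ T)) this

theorem mem_of_partnerClass_eq_inr {s : S} {t : T} (h : partnerClass M s = .inr t) :
    (s, t) ∈ M := by
  rw [partnerClass] at h
  split_ifs at h with hex
  cases h
  exact hex.choose_spec

theorem eq_of_partnerClass_eq_inl {s s₀ : S} (h : partnerClass M s = .inl s₀) : s = s₀ := by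
  rw [partnerClass] at h
  split_ifs at h
  cases h
  rfl

theorem card_partnerClass_fiber_le [Fintype S] [DecidableEq S] [DecidableEq T] {k : ℕ}
    (hk : 0 < k) (hT : ∀ t : T, (M.filter (fun e => e.2 = t)).card ≤ k) (a : S ⊕ T) :
    #{s | partnerClass M s = a} ≤ k := by
  rcases a with s₀ | t
  · refine le_trans (card_le_one.mpr fun s hs s' hs' => ?_) hk
    rw [mem_filter_univ] at hs hs'
    rw [eq_of_partnerClass_eq_inl M hs, eq_of_partnerClass_eq_inl M hs']
  · refine le_trans (card_le_card_of_injOn (fun s => (s, t)) (fun s hs => ?_) ?_) (hT t)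
    · rw [mem_coe, mem_filter_univ] at hs
      exact mem_filter.mpr ⟨mem_of_partnerClass_eq_inr M hs, rfl⟩
    · exact fun _ _ _ _ h => congrArg Prod.fst h

end Partner

theorem stmt12_general {S T : Type*} [Fintype S] [DecidableEq S] [Fintype T] [DecidableEq T]
    (M : Finset (S × T)) (n d k r : ℕ)
    (hn : Fintype.card S = n) (hnkr : n = k * d + r)
    (hS : ∀ s : S, (M.filter (fun e => e.1 = s)).card ≤ 1)
    (hT : ∀ t : T, (M.filter (fun e => e.2 = t)).card ≤ k) :
    ∃ σ : S ≃ Fin n, ∀ e ∈ M, ∀ e' ∈ M, e.2 = e'.2 → e.1 ≠ e'.1 →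
      (d : ℤ) ≤ min |(((σ e.1 : Fin n) : ℕ) : ℤ) - (((σ e'.1 : Fin n) : ℕ) : ℤ)|
        ((n : ℤ) - |(((σ e.1 : Fin n) : ℕ) : ℤ) - (((σ e'.1 : Fin n) : ℕ) : ℤ)|) := by
  rcases Nat.eq_zero_or_pos k with rfl | hk
  · refine ⟨Fintype.equivFinOfCardEq hn, fun e he _ _ _ _ => absurd (hT e.2) ?_⟩
    have : e ∈ M.filter (fun x => x.2 = e.2) := mem_filter.mpr ⟨he, rfl⟩
    exact (card_pos.mpr ⟨e, this⟩).not_ge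
  obtain ⟨σ, hσ⟩ := exists_equiv_fin_inRowWindow (partnerClass M) hn
    (card_partnerClass_fiber_le M hk hT)
  refine ⟨σ.trans (colMajorEquiv hk), fun e he e' he' ht hne => ?_⟩
  have hd : d ≤ n / k := (Nat.le_div_iff_mul_le hk).mpr (by rw [hnkr, mul_comm]; omega)
  have hc : partnerClass M e.1 = partnerClass M e'.1 := by
    rw [partnerClass_of_mem M hS he, partnerClass_of_mem M hS he', ht]
  show (d : ℤ) ≤ cyclicDist n (colMajor k n (σ e.1)) (colMajor k n (σ e'.1))
  refine le_trans (Int.ofNat_le.mpr hd) ?_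
  rcases lt_or_gt_of_ne (σ.injective.ne hne) with h | h
  · exact div_le_cyclicDist_colMajor hk h (σ e'.1).2 (hσ _ _ hc h)
  · rw [cyclicDist_comm]
    exact div_le_cyclicDist_colMajor hk h (σ e.1).2 (hσ _ _ hc.symm h)

/-- If `|S| = n = kd + r` with `0 ≤ r < d` and `M` is an edge set of a bipartite graph
`(S,T)` in which every `s ∈ S` has degree at most `1` and every `t ∈ T` has degree at
most `k`, then there is a cyclic ordering of `S` under which `M` is a feasible cyclic
`d`-distance matching: the cyclic distance `min(|i-j|, n-|i-j|)` of the positions of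
any two edges sharing a `T`-node is at least `d`. -/
theorem stmt12 {S T : Type*} [Fintype S] [DecidableEq S] [Fintype T] [DecidableEq T]
    (M : Finset (S × T)) (n d k r : ℕ) (hd : 1 ≤ d)
    (hn : Fintype.card S = n) (hnkr : n = k * d + r) (hr : r < d)
    (hS : ∀ s : S, (M.filter (fun e => e.1 = s)).card ≤ 1)
    (hT : ∀ t : T, (M.filter (fun e => e.2 = t)).card ≤ k) :
    ∃ σ : S ≃ Fin n, ∀ e ∈ M, ∀ e' ∈ M, e.2 = e'.2 → e.1 ≠ e'.1 →
      (d : ℤ) ≤ min |(((σ e.1 : Fin n) : ℕ) : ℤ) - (((σ e'.1 : Fin n) : ℕ) : ℤ)|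
        ((n : ℤ) - |(((σ e.1 : Fin n) : ℕ) : ℤ) - (((σ e'.1 : Fin n) : ℕ) : ℤ)|) :=
  stmt12_general M n d k r hn hnkr hS hT
end

section
/- Let H be a 2-regular 3-dimensional hypergraph on disjoint sets X, Y, Z (each element lies in exactly two hyperedges of ℋ ⊆ X×Y×Z, so |ℋ| = 2|Z|). In the bipartite graph G constructed from H (with S = ℋ_X ∪ Y ∪ ℋ_Z, T = X ∪ ℋ_Y ∪ Z, edges e^(X)e^(Y), e^(Y)e^(Z) for each e ∈ ℋ, and edges between each u ∈ X∪Y∪Z and its two incident hyperedge copies), with S_1 = ℋ_X ∪ Y, S_2 = Y ∪ ℋ_Z: the maximum size of a double matching in G equals ν(H) + 4|Z|, where ν(H) is the maximum size of a 3-dimensional matching in H. -/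
section DoubleMatchingConstruction

variable {X Y Z : Type*} [DecidableEq X] [DecidableEq Y] [DecidableEq Z]
variable (ℋ : Finset (X × Y × Z))

/-- Adjacency of the bipartite graph `G` built from the hypergraph `ℋ`:
`S = ℋ_X ⊕ Y ⊕ ℋ_Z`, `T = X ⊕ ℋ_Y ⊕ Z`; each hyperedge `e` contributes the edges
`e⁽ˣ⁾e⁽ʸ⁾`, `e⁽ʸ⁾e⁽ᶻ⁾`, and each `u ∈ X ∪ Y ∪ Z` is joined to the copies of the
hyperedges incident to it. -/
def adjConstr :
    ({e : X × Y × Z // e ∈ ℋ} ⊕ Y ⊕ {e : X × Y × Z // e ∈ ℋ}) →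
    (X ⊕ {e : X × Y × Z // e ∈ ℋ} ⊕ Z) → Prop
  | Sum.inl e, Sum.inl x => x = e.val.1
  | Sum.inl e, Sum.inr (Sum.inl f) => e = f
  | Sum.inr (Sum.inl y), Sum.inr (Sum.inl f) => f.val.2.1 = y
  | Sum.inr (Sum.inr e), Sum.inr (Sum.inl f) => e = f
  | Sum.inr (Sum.inr e), Sum.inr (Sum.inr z) => z = e.val.2.2
  | _, _ => False

/-- Membership in `S₁ = ℋ_X ∪ Y`. -/
def inS1 : ({e : X × Y × Z // e ∈ ℋ} ⊕ Y ⊕ {e : X × Y × Z // e ∈ ℋ}) → Prop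
  | Sum.inl _ => True
  | Sum.inr (Sum.inl _) => True
  | Sum.inr (Sum.inr _) => False

/-- Membership in `S₂ = Y ∪ ℋ_Z`. -/
def inS2 : ({e : X × Y × Z // e ∈ ℋ} ⊕ Y ⊕ {e : X × Y × Z // e ∈ ℋ}) → Prop
  | Sum.inl _ => False
  | Sum.inr _ => True

/-- `M` is a double matching in the constructed graph: it uses only edges of `G`, and
both its restriction to edges with `S`-endpoint in `S₁` and its restriction to edges
with `S`-endpoint in `S₂` are matchings. -/
def IsDoubleMatching
    (M : Finset (({e : X × Y × Z // e ∈ ℋ} ⊕ Y ⊕ {e : X × Y × Z // e ∈ ℋ}) ×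
      (X ⊕ {e : X × Y × Z // e ∈ ℋ} ⊕ Z))) : Prop :=
  (∀ p ∈ M, adjConstr ℋ p.1 p.2) ∧
  (∀ p ∈ M, ∀ q ∈ M, p ≠ q → inS1 ℋ p.1 → inS1 ℋ q.1 → p.1 ≠ q.1 ∧ p.2 ≠ q.2) ∧
  (∀ p ∈ M, ∀ q ∈ M, p ≠ q → inS2 ℋ p.1 → inS2 ℋ q.1 → p.1 ≠ q.1 ∧ p.2 ≠ q.2)

end DoubleMatchingConstruction

/-!
Every edge of `G` is owned by exactly one hyperedge `e`, and the five edges owned by `e` form a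
path `e⁽ˣ⁾x – e⁽ˣ⁾e⁽ʸ⁾ – y e⁽ʸ⁾ – e⁽ᶻ⁾e⁽ʸ⁾ – e⁽ᶻ⁾z` in which consecutive edges share an endpoint
within `S₁` or within `S₂`, so they cannot both lie in a double matching. Edges owned by distinct
hyperedges conflict only when both are legs `e⁽ˣ⁾x`, `y e⁽ʸ⁾` or `e⁽ᶻ⁾z` through a common vertex.
Hence a double matching takes at most two edges from each hyperedge, three only when it takes all
three legs, and the hyperedges whose legs it takes form a 3-dimensional matching. Conversely, the
legs of a 3-dimensional matching `F` together with the two middle edges of every other hyperedge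
form a double matching of size `|F| + 2|ℋ|`. Finally `|ℋ| = 2|Z|` by 2-regularity on `Z`.
-/

section DoubleMatchingBound

variable {X Y Z : Type*}
variable (ℋ : Finset (X × Y × Z))

abbrev GraphEdge := (ℋ ⊕ Y ⊕ ℋ) × (X ⊕ ℋ ⊕ Z)

/-- The edges owned by `e`, numbered along its conflict path; slots `0, 2, 4` are the legs. -/
def slotEdge (e : ℋ) : Fin 5 → GraphEdge ℋ :=
  ![(.inl e, .inl e.1.1), (.inl e, .inr (.inl e)), (.inr (.inl e.1.2.1), .inr (.inl e)),
    (.inr (.inr e), .inr (.inl e)), (.inr (.inr e), .inr (.inr e.1.2.2))]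

theorem slotEdge_injective : Function.Injective fun q : ℋ × Fin 5 => slotEdge ℋ q.1 q.2 := by
  rintro ⟨e, i⟩ ⟨f, j⟩ h
  fin_cases i <;> fin_cases j <;> simp_all [slotEdge]

theorem adjConstr_iff_exists_slotEdge {s t} :
    adjConstr ℋ s t ↔ ∃ e i, slotEdge ℋ e i = (s, t) := by
  constructor
  · intro h
    rcases s with e | y | e <;> rcases t with x | f | z <;> simp only [adjConstr] at h <;> subst h
    · exact ⟨e, 0, rfl⟩
    · exact ⟨e, 1, rfl⟩
    · exact ⟨f, 2, rfl⟩
    · exact ⟨e, 3, rfl⟩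
    · exact ⟨e, 4, rfl⟩
  · rintro ⟨e, i, h⟩
    fin_cases i <;> simp only [slotEdge, Prod.ext_iff] at h <;> obtain ⟨rfl, rfl⟩ := h <;> rfl

def Conflict (p q : GraphEdge ℋ) : Prop :=
  (inS1 ℋ p.1 ∧ inS1 ℋ q.1 ∨ inS2 ℋ p.1 ∧ inS2 ℋ q.1) ∧ (p.1 = q.1 ∨ p.2 = q.2)

theorem isDoubleMatching_iff (M : Finset (GraphEdge ℋ)) :
    IsDoubleMatching ℋ M ↔
      (∀ p ∈ M, adjConstr ℋ p.1 p.2) ∧ ∀ p ∈ M, ∀ q ∈ M, p ≠ q → ¬Conflict ℋ p q := by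
  unfold IsDoubleMatching Conflict
  grind

theorem conflict_slotEdge_iff (e f : ℋ) (i j : Fin 5) :
    Conflict ℋ (slotEdge ℋ e i) (slotEdge ℋ f j) ↔
      e = f ∧ (i = j ∨ j.val = i.val + 1 ∨ i.val = j.val + 1) ∨
      i = 0 ∧ j = 0 ∧ e.1.1 = f.1.1 ∨ i = 2 ∧ j = 2 ∧ e.1.2.1 = f.1.2.1 ∨
      i = 4 ∧ j = 4 ∧ e.1.2.2 = f.1.2.2 := by
  fin_cases i <;> fin_cases j <;> simp [Conflict, slotEdge, inS1, inS2, or_comm]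

def NoTwoConsecutive (K : Finset (Fin 5)) : Prop :=
  ∀ i ∈ K, ∀ j ∈ K, j.val ≠ i.val + 1

theorem NoTwoConsecutive.card_le_two_or_eq {K : Finset (Fin 5)} (hK : NoTwoConsecutive K) :
    K.card ≤ 2 ∨ K = {0, 2, 4} := by
  revert K
  unfold NoTwoConsecutive
  decide

theorem card_filter_prod_eq_sum {α β : Type*} [Fintype α] [Fintype β] (P : α → β → Prop)
    [∀ a b, Decidable (P a b)] :
    (Finset.univ.filter fun q : α × β => P q.1 q.2).card =
      ∑ a, (Finset.univ.filter (P a)).card := by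
  simp only [Finset.card_filter, Fintype.sum_prod_type]

def IsThreeDimMatching (F : Finset (X × Y × Z)) : Prop :=
  ∀ e ∈ F, ∀ f ∈ F, e ≠ f → e.1 ≠ f.1 ∧ e.2.1 ≠ f.2.1 ∧ e.2.2 ≠ f.2.2

theorem exists_isThreeDimMatching_of_isDoubleMatching {M : Finset (GraphEdge ℋ)}
    (hM : IsDoubleMatching ℋ M) :
    ∃ F ⊆ ℋ, IsThreeDimMatching F ∧ M.card ≤ F.card + 2 * ℋ.card := by
  classical
  obtain ⟨hadj, hfree⟩ := (isDoubleMatching_iff ℋ M).1 hM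
  set K : ℋ → Finset (Fin 5) := fun e => Finset.univ.filter fun i => slotEdge ℋ e i ∈ M
  have hmem (e i) : i ∈ K e ↔ slotEdge ℋ e i ∈ M := by simp [K]
  have hconflict {e f i j} (hne : (e, i) ≠ (f, j)) (hi : i ∈ K e) (hj : j ∈ K f) :
      ¬Conflict ℋ (slotEdge ℋ e i) (slotEdge ℋ f j) :=
    hfree _ ((hmem e i).1 hi) _ ((hmem f j).1 hj) ((slotEdge_injective ℋ).ne hne)
  have hK_sparse (e) : NoTwoConsecutive (K e) := fun i hi j hj hij =>
    hconflict (by simp only [ne_eq, Prod.mk.injEq, Fin.ext_iff, true_and]; omega) hi hj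
      ((conflict_slotEdge_iff ℋ e e i j).2 (Or.inl ⟨rfl, Or.inr (Or.inl hij)⟩))
  set T := Finset.univ.filter fun e => K e = {0, 2, 4}
  refine ⟨T.map (Function.Embedding.subtype _), ?_, ?_, ?_⟩
  · intro x hx
    obtain ⟨e, -, rfl⟩ := Finset.mem_map.1 hx
    exact e.2
  · intro a ha b hb hab
    obtain ⟨e, he, rfl⟩ := Finset.mem_map.1 ha
    obtain ⟨f, hf, rfl⟩ := Finset.mem_map.1 hb
    have hK {g} (hg : g ∈ T) (i) (hi : i ∈ ({0, 2, 4} : Finset (Fin 5))) : i ∈ K g :=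
      (Finset.mem_filter.1 hg).2 ▸ hi
    have hne (i : Fin 5) : (e, i) ≠ (f, i) := by simpa using fun h => hab (congrArg _ h)
    have hslot (i : Fin 5) (hi : i ∈ ({0, 2, 4} : Finset (Fin 5))) :
        ¬Conflict ℋ (slotEdge ℋ e i) (slotEdge ℋ f i) :=
      hconflict (hne i) (hK he i hi) (hK hf i hi)
    simp only [conflict_slotEdge_iff] at hslot
    exact ⟨fun h => hslot 0 (by decide) (Or.inr (Or.inl ⟨rfl, rfl, h⟩)),
      fun h => hslot 2 (by decide) (Or.inr (Or.inr (Or.inl ⟨rfl, rfl, h⟩))),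
      fun h => hslot 4 (by decide) (Or.inr (Or.inr (Or.inr ⟨rfl, rfl, h⟩)))⟩
  · calc M.card ≤ (Finset.univ.filter fun q : ℋ × Fin 5 => slotEdge ℋ q.1 q.2 ∈ M).card := by
          refine Finset.card_le_card_of_surjOn (fun q => slotEdge ℋ q.1 q.2) fun p hp => ?_
          obtain ⟨e, i, h⟩ := (adjConstr_iff_exists_slotEdge ℋ).1 (hadj p hp)
          exact ⟨(e, i), by simpa [h] using hp, h⟩
      _ = ∑ e, (K e).card := card_filter_prod_eq_sum fun e i => slotEdge ℋ e i ∈ M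
      _ ≤ ∑ e, (2 + if K e = {0, 2, 4} then 1 else 0) := by
          refine Finset.sum_le_sum fun e _ => ?_
          rcases (hK_sparse e).card_le_two_or_eq with h | h
          · split_ifs <;> omega
          · simp [h]
      _ = (T.map (Function.Embedding.subtype _)).card + 2 * ℋ.card := by
          simp only [Finset.univ_eq_attach, Finset.sum_add_distrib, Finset.sum_const,
            Finset.card_attach, smul_eq_mul, Finset.sum_boole, Nat.cast_id, Finset.card_map, T]
          ring

theorem exists_isDoubleMatching_card_eq {F : Finset (X × Y × Z)} (hFℋ : F ⊆ ℋ)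
    (hF : IsThreeDimMatching F) :
    ∃ M, IsDoubleMatching ℋ M ∧ M.card = F.card + 2 * ℋ.card := by
  classical
  set K : ℋ → Finset (Fin 5) := fun e => if e.1 ∈ F then {0, 2, 4} else {1, 3}
  have hK_sparse (e) : NoTwoConsecutive (K e) := by
    unfold NoTwoConsecutive K
    split_ifs <;> decide
  have hF_of_mem {e : ℋ} {i : Fin 5} (hi : i ∈ K e) (heven : i ∈ ({0, 2, 4} : Finset (Fin 5))) :
      e.1 ∈ F := by
    by_contra h
    simp only [K, h, if_false, Finset.mem_insert, Finset.mem_singleton] at hi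
    rcases hi with rfl | rfl <;> simp at heven
  refine ⟨(Finset.univ.filter fun q : ℋ × Fin 5 => q.2 ∈ K q.1).map ⟨_, slotEdge_injective ℋ⟩,
    (isDoubleMatching_iff ℋ _).2 ⟨?_, ?_⟩, ?_⟩
  · intro p hp
    obtain ⟨⟨e, i⟩, -, rfl⟩ := Finset.mem_map.1 hp
    exact (adjConstr_iff_exists_slotEdge ℋ).2 ⟨e, i, rfl⟩
  · intro p hp q hq hpq hc
    obtain ⟨⟨e, i⟩, hi, rfl⟩ := Finset.mem_map.1 hp
    obtain ⟨⟨f, j⟩, hj, rfl⟩ := Finset.mem_map.1 hq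
    simp only [Finset.mem_filter, Finset.mem_univ, true_and] at hi hj
    have hne : i = j → e ≠ f := by
      rintro rfl rfl
      exact hpq rfl
    have hF' (hi0 : i ∈ ({0, 2, 4} : Finset (Fin 5))) (hij : i = j) :=
      hF _ (hF_of_mem hi hi0) _ (hF_of_mem hj (hij ▸ hi0)) (Subtype.coe_injective.ne (hne hij))
    rcases (conflict_slotEdge_iff ℋ e f i j).1 hc with
      ⟨rfl, rfl | hij | hij⟩ | ⟨rfl, rfl, h⟩ | ⟨rfl, rfl, h⟩ | ⟨rfl, rfl, h⟩
    · exact hne rfl rfl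
    · exact hK_sparse e i hi j hj hij
    · exact hK_sparse e j hj i hi hij
    · exact (hF' (by decide) rfl).1 h
    · exact (hF' (by decide) rfl).2.1 h
    · exact (hF' (by decide) rfl).2.2 h
  · rw [Finset.card_map, card_filter_prod_eq_sum fun e i => i ∈ K e]
    calc ∑ e, (Finset.univ.filter (· ∈ K e)).card
        = ∑ e : ℋ, (2 + if e.1 ∈ F then 1 else 0) := by
          refine Finset.sum_congr rfl fun e _ => ?_
          simp only [Finset.filter_mem_eq_inter, Finset.univ_inter, K]
          split_ifs <;> rfl
      _ = F.card + 2 * ℋ.card := by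
          rw [Finset.sum_add_distrib, Finset.sum_coe_sort ℋ fun x => if x ∈ F then 1 else 0,
            Finset.sum_boole, Finset.filter_mem_eq_inter, Finset.inter_eq_right.2 hFℋ]
          simp only [Finset.sum_const, Finset.card_univ, Fintype.card_coe, smul_eq_mul, Nat.cast_id]
          ring

end DoubleMatchingBound

theorem stmt17_general {X Y Z : Type*} [Fintype Z]
    [DecidableEq Z]
    (ℋ : Finset (X × Y × Z))
    (h2Z : ∀ z : Z, (ℋ.filter (fun e => e.2.2 = z)).card = 2)
    (ν : ℕ)
    (hν : IsGreatest {m : ℕ | ∃ F ⊆ ℋ,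
      (∀ e ∈ F, ∀ f ∈ F, e ≠ f →
        e.1 ≠ f.1 ∧ e.2.1 ≠ f.2.1 ∧ e.2.2 ≠ f.2.2) ∧ F.card = m} ν) :
    IsGreatest {m : ℕ | ∃ M, IsDoubleMatching ℋ M ∧ M.card = m}
      (ν + 4 * Fintype.card Z) := by
  have hℋ_card : ℋ.card = 2 * Fintype.card Z := by
    rw [Finset.card_eq_sum_card_fiberwise fun e _ => Finset.mem_univ e.2.2]
    simp [h2Z, mul_comm]
  obtain ⟨⟨F, hFℋ, hF, rfl⟩, hν_max⟩ := hν
  refine ⟨?_, ?_⟩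
  · obtain ⟨M, hM, hM_card⟩ := exists_isDoubleMatching_card_eq ℋ hFℋ hF
    exact ⟨M, hM, by omega⟩
  · rintro _ ⟨M, hM, rfl⟩
    obtain ⟨F', hF'ℋ, hF', hM_card⟩ := exists_isThreeDimMatching_of_isDoubleMatching ℋ hM
    have hF'_card : F'.card ≤ F.card := hν_max ⟨F', hF'ℋ, hF', rfl⟩
    omega

/-- For a 2-regular 3-dimensional hypergraph `ℋ ⊆ X × Y × Z`, the maximum size of a
double matching in the constructed bipartite graph equals `ν(ℋ) + 4|Z|`, where
`ν(ℋ)` is the maximum size of a 3-dimensional matching in `ℋ`. -/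
theorem stmt17 {X Y Z : Type*} [Fintype X] [Fintype Y] [Fintype Z]
    [DecidableEq X] [DecidableEq Y] [DecidableEq Z]
    (ℋ : Finset (X × Y × Z))
    (h2X : ∀ x : X, (ℋ.filter (fun e => e.1 = x)).card = 2)
    (h2Y : ∀ y : Y, (ℋ.filter (fun e => e.2.1 = y)).card = 2)
    (h2Z : ∀ z : Z, (ℋ.filter (fun e => e.2.2 = z)).card = 2)
    (ν : ℕ)
    (hν : IsGreatest {m : ℕ | ∃ F ⊆ ℋ,
      (∀ e ∈ F, ∀ f ∈ F, e ≠ f →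
        e.1 ≠ f.1 ∧ e.2.1 ≠ f.2.1 ∧ e.2.2 ≠ f.2.2) ∧ F.card = m} ν) :
    IsGreatest {m : ℕ | ∃ M, IsDoubleMatching ℋ M ∧ M.card = m}
      (ν + 4 * Fintype.card Z) :=
  stmt17_general ℋ h2Z ν hν
end
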